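/- For every $k \ge 1$, $T \ge 1$, consider the set cover instance with $kT$ unit-cost sets indexed by $(i,j) \in [k] \times [T]$ and $kT$ elements indexed by $(i,j)$, where element $(i,j)$ is contained in set $(i',j)$ iff $i' \ge i$. Any deterministic algorithm that, upon arrival of each element, must have total fractional mass at least 1 on sets containing it (only increasing variables), where elements arrive in lexicographic order of $(i,j)$, incurs, against a uniformly random relabeling of the first index, expected cost at least $T \cdot H_k$ where $H_k = \sum_{i=1}^k 1/i$, while there is a feasible solution (all sets $(k, j)$) of cost $T$. -/

import Mathlib

/-!
Relabel the sets by `σ`, so that element `(i, j)` is covered by the sets `(σ q, j)` with `q ≥ i`.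
An online algorithm serving `(i, j)` has only seen `σ` below `i`, so composing `σ` with the
transposition of `i` and any `q ≥ i` leaves its solution unchanged: averaged over `σ`, the mass it
puts on `(σ q, j)` is the same for all `k - i` such `q`. One of them must receive mass at least `1`,
so the set `(σ i, j)`, which no later element needs, carries expected mass at least `1 / (k - i)`.
These sets are pairwise distinct and the variables only increase, so the expected final cost is at
least `∑ᵢ T / (k - i) = T · H_k`. Choosing the sets `(σ (k - 1), j)` gives a cover of cost `T`.
-/

open Finset

section Relabeling

variable {α : Type*} [Fintype α] [DecidableEq α] [Preorder α]

theorem sum_perm_apply_eq_sum_perm_apply_self {M : Type*} [AddCommMonoid M]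
    (F : Equiv.Perm α → α → M) {i q : α}
    (hF : ∀ σ σ' : Equiv.Perm α, (∀ r, r < i → σ r = σ' r) → F σ = F σ') (hiq : i ≤ q) :
    ∑ σ, F σ (σ q) = ∑ σ, F σ (σ i) := by
  rw [← Equiv.sum_comp (Equiv.mulRight (Equiv.swap i q))]
  refine sum_congr rfl fun σ _ => ?_
  have hagree : ∀ r, r < i → (σ * Equiv.swap i q) r = σ r := fun r hr => by
    rw [Equiv.Perm.mul_apply, Equiv.swap_apply_of_ne_of_ne hr.ne (hr.trans_le hiq).ne]
  simp only [Equiv.coe_mulRight, hF _ _ hagree, Equiv.Perm.mul_apply, Equiv.swap_apply_right]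

theorem card_perm_le_card_mul_sum_perm_apply_self [DecidableLE α]
    (F : Equiv.Perm α → α → ℝ) (i : α)
    (hF : ∀ σ σ' : Equiv.Perm α, (∀ r, r < i → σ r = σ' r) → F σ = F σ')
    (hcover : ∀ σ : Equiv.Perm α, 1 ≤ ∑ p ∈ univ.filter (fun p => i ≤ σ.symm p), F σ p) :
    (Fintype.card (Equiv.Perm α) : ℝ) ≤
      #(univ.filter (fun q => i ≤ q)) * ∑ σ, F σ (σ i) := by
  have hcover' : ∀ σ : Equiv.Perm α, 1 ≤ ∑ q ∈ univ.filter (fun q => i ≤ q), F σ (σ q) :=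
    fun σ => (hcover σ).trans_eq <| (sum_equiv σ (by simp) fun _ _ => rfl).symm
  calc (Fintype.card (Equiv.Perm α) : ℝ) = ∑ _σ : Equiv.Perm α, (1 : ℝ) := by simp
    _ ≤ ∑ σ, ∑ q ∈ univ.filter (fun q => i ≤ q), F σ (σ q) := sum_le_sum fun σ _ => hcover' σ
    _ = ∑ q ∈ univ.filter (fun q => i ≤ q), ∑ σ, F σ (σ i) := by
      rw [sum_comm]
      exact sum_congr rfl fun q hq =>
        sum_perm_apply_eq_sum_perm_apply_self F hF (mem_filter.mp hq).2
    _ = _ := by rw [sum_const, nsmul_eq_mul]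

theorem exists_cover_of_cost_eq_card [DecidableLE α] {κ : Type*} [Fintype κ]
    (σ : Equiv.Perm α) {m : α} (hm : ∀ i, i ≤ m) :
    ∃ y : α × κ → ℝ, (∀ e, y e ∈ Set.Icc (0 : ℝ) 1) ∧
      (∀ i j, 1 ≤ ∑ p ∈ univ.filter (fun p => i ≤ σ.symm p), y (p, j)) ∧
      ∑ e, y e = Fintype.card κ := by
  refine ⟨fun e => if e.1 = σ m then 1 else 0, fun e => ?_, fun i j => ?_, ?_⟩
  · dsimp only
    split_ifs <;> simp
  · simp [hm]
  · rw [Fintype.sum_prod_type_right]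
    simp [sum_ite_eq']

end Relabeling

theorem sum_sum_apply_perm_le_sum {ι κ : Type*} [Fintype ι] [Fintype κ]
    (Y : ι → κ → ι × κ → ℝ) (Z : ι × κ → ℝ) (hYZ : ∀ i j e, Y i j e ≤ Z e)
    (σ : Equiv.Perm ι) :
    ∑ i, ∑ j, Y i j (σ i, j) ≤ ∑ e, Z e := by
  calc ∑ i, ∑ j, Y i j (σ i, j) ≤ ∑ i, ∑ j, Z (σ i, j) := by gcongr with i _ j _; exact hYZ _ _ _
    _ = ∑ e, Z e := by
      rw [Fintype.sum_prod_type]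
      exact Equiv.sum_comp σ fun p => ∑ j, Z (p, j)

theorem sum_fin_one_div_sub_eq_sum_range (k : ℕ) :
    ∑ i : Fin k, (1 : ℝ) / ((k - i : ℕ) : ℝ) = ∑ n ∈ range k, (1 : ℝ) / (n + 1) := by
  rw [Fin.sum_univ_eq_sum_range (fun i => (1 : ℝ) / ((k - i : ℕ) : ℝ)),
    ← sum_range_reflect]
  refine sum_congr rfl fun n hn => ?_
  rw [show k - (k - 1 - n) = n + 1 by simp at hn; omega, Nat.cast_succ]

/-- Theorem 2.2 lower bound construction: a set cover instance with `k*T`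
unit-cost sets and elements indexed by `(i,j) ∈ [k] × [T]`, where element
`(i,j)` is contained in set `(i',j)` iff `i ≤ i'`.  The first index is
relabeled by a uniformly random permutation `σ`, so element `(i,j)` is
contained in set `(p,j)` iff `i ≤ σ⁻¹ p`.  Any deterministic online algorithm
(`X σ i j` is its fractional solution after serving element `(i,j)`;
variables are in `[0,1]`, only increase along the lexicographic arrival order,
cover each arrived element, and after round `i` depend only on `σ` restricted
to rounds before `i`) has expected cost at least `T * H_k`, while for every
`σ` there is a feasible solution of cost `T`. -/
theorem stmt_7 (k T : ℕ) (hk : 1 ≤ k) (hT : 1 ≤ T)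
    (X : Equiv.Perm (Fin k) → Fin k → Fin T → Fin k × Fin T → ℝ)
    -- variables only increase, elements arriving in lexicographic order of (i,j)
    (hmono : ∀ σ (i i' : Fin k) (j j' : Fin T),
        ((i : ℕ) < (i' : ℕ) ∨ (i = i' ∧ (j : ℕ) ≤ (j' : ℕ))) →
        ∀ e, X σ i j e ≤ X σ i' j' e)
    -- upon arrival of element (i,j), total mass on sets containing it is ≥ 1;
    -- under relabeling σ, element (i,j) is contained in set (p,j) iff i ≤ σ⁻¹ p
    (hcover : ∀ σ (i : Fin k) (j : Fin T),
        1 ≤ ∑ p ∈ Finset.univ.filter (fun p : Fin k => i ≤ σ.symm p),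
              X σ i j (p, j))
    -- the algorithm is deterministic and online: its solution after round i
    -- depends only on the instance revealed so far, i.e. on σ before round i
    (honline : ∀ (σ σ' : Equiv.Perm (Fin k)) (i : Fin k) (j : Fin T),
        (∀ r : Fin k, (r : ℕ) < (i : ℕ) → σ r = σ' r) → X σ i j = X σ' i j) :
    -- expected final cost over a uniformly random σ is at least T * H_k ...
    ((k.factorial : ℝ) * ((T : ℝ) * ∑ i ∈ Finset.range k, (1 : ℝ) / (i + 1)) ≤
        ∑ σ : Equiv.Perm (Fin k),
          ∑ e : Fin k × Fin T, X σ ⟨k - 1, by omega⟩ ⟨T - 1, by omega⟩ e) ∧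
    -- ... while there is a feasible solution (all sets (k, j)) of cost T
    (∀ σ : Equiv.Perm (Fin k), ∃ y : Fin k × Fin T → ℝ,
        (∀ e, y e ∈ Set.Icc (0 : ℝ) 1) ∧
        (∀ (i : Fin k) (j : Fin T),
            1 ≤ ∑ p ∈ Finset.univ.filter (fun p : Fin k => i ≤ σ.symm p),
                  y (p, j)) ∧
        ∑ e : Fin k × Fin T, y e = (T : ℝ)) := by
  have hlast : ∀ i : Fin k, i ≤ ⟨k - 1, by omega⟩ := fun i => Fin.le_def.mpr (by simp; omega)
  have hlex : ∀ (i : Fin k) (j : Fin T),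
      (i : ℕ) < k - 1 ∨ (i = ⟨k - 1, by omega⟩ ∧ (j : ℕ) ≤ T - 1) :=
    fun i j => by simp only [Fin.ext_iff]; omega
  refine ⟨?_, fun σ => by simpa using exists_cover_of_cost_eq_card (κ := Fin T) σ hlast⟩
  have hround : ∀ (i : Fin k) (j : Fin T),
      (k.factorial : ℝ) / ((k - i : ℕ) : ℝ) ≤ ∑ σ, X σ i j (σ i, j) := fun i j => by
    have h := card_perm_le_card_mul_sum_perm_apply_self (fun σ p => X σ i j (p, j)) i
      (fun σ σ' h => funext fun p => congrFun (honline σ σ' i j fun r hr => h r hr) (p, j))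
      (hcover · i j)
    rw [filter_le_eq_Ici, Fin.card_Ici, Fintype.card_perm, Fintype.card_fin] at h
    rwa [div_le_iff₀' (by simp)]
  calc (k.factorial : ℝ) * ((T : ℝ) * ∑ i ∈ Finset.range k, (1 : ℝ) / (i + 1))
      = ∑ i : Fin k, ∑ _j : Fin T, (k.factorial : ℝ) / ((k - i : ℕ) : ℝ) := by
        simp only [← sum_fin_one_div_sub_eq_sum_range, sum_const, card_univ, Fintype.card_fin,
          nsmul_eq_mul, mul_sum, mul_one_div]
        ring_nf
    _ ≤ ∑ i, ∑ j, ∑ σ, X σ i j (σ i, j) := by gcongr with i _ j _; exact hround i j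
    _ = ∑ σ, ∑ i, ∑ j, X σ i j (σ i, j) := by simp only [sum_comm (γ := Equiv.Perm (Fin k))]
    _ ≤ _ := sum_le_sum fun σ _ => sum_sum_apply_perm_le_sum _ _
        (fun i j => hmono σ i _ j _ (hlex i j)) σ
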